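/- arXiv:2412.15463 — 2 statements merged into one kernel-verified Lean document; each statement's English description precedes it below -/
import Mathlib

section
/- Let d ≥ 3, Ω = {1,…,d}, and let F ≤ F' ≤ Sym(Ω) be permutation groups such that every element of F' maps each F-orbit onto itself, and assume that F acts freely on Ω. Let T be a legally colored d-regular tree, let L be a geodesic line in T, let a ∈ G(F,F') satisfy a·L(i) = L(i+m) for all i ∈ ℤ and some integer m ≥ 1, and let b ∈ G(F,F') fix L pointwise, i.e., b·L(i) = L(i) for all i ∈ ℤ. If ab = ba, then b is the identity automorphism of T. -/
/-- The automorphism group of a simple graph, as a subgroup of the permutation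
group of its vertex set. -/
def SimpleGraph.autSubgroup {V : Type*} (T : SimpleGraph V) : Subgroup (Equiv.Perm V) where
  carrier := {e | ∀ u v : V, T.Adj (e u) (e v) ↔ T.Adj u v}
  one_mem' := fun _ _ => Iff.rfl
  mul_mem' := by
    intro a b ha hb u v
    simp only [Equiv.Perm.mul_apply]
    rw [ha, hb]
  inv_mem' := by
    intro a ha u v
    simpa using (ha (a⁻¹ u) (a⁻¹ v)).symm

/-- A legal coloring of a `d`-regular tree: every vertex's edges are colored
bijectively with the colors `Fin d`. The color of the edge `{u, v}` is `color u v`. -/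
structure LegalColoring {V : Type*} (T : SimpleGraph V) (d : ℕ) where
  color : V → V → Fin d
  symm : ∀ ⦃u v : V⦄, T.Adj u v → color u v = color v u
  bij : ∀ (v : V) (i : Fin d), ∃! w : V, T.Adj v w ∧ color v w = i

/-- The local permutation `σ(g, v)` of an automorphism `g` at a vertex `v`
belongs to the permutation group `F`. -/
def LocalIn {V : Type*} {d : ℕ} (T : SimpleGraph V) (C : LegalColoring T d)
    (F : Subgroup (Equiv.Perm (Fin d))) (g : Equiv.Perm V) (v : V) : Prop :=
  ∃ π ∈ F, ∀ ⦃w : V⦄, T.Adj v w → C.color (g v) (g w) = π (C.color v w)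

/-- The universal Burger–Mozes group `U(F)` (as a set of permutations of the vertices):
automorphisms whose local permutation lies in `F` at every vertex. -/
def USet {V : Type*} {d : ℕ} (T : SimpleGraph V) (C : LegalColoring T d)
    (F : Subgroup (Equiv.Perm (Fin d))) : Set (Equiv.Perm V) :=
  {g | g ∈ T.autSubgroup ∧ ∀ v : V, LocalIn T C F g v}

/-- The group `G(F)`: automorphisms whose local permutation lies in `F` at all but
finitely many vertices. -/
def GSet {V : Type*} {d : ℕ} (T : SimpleGraph V) (C : LegalColoring T d)
    (F : Subgroup (Equiv.Perm (Fin d))) : Set (Equiv.Perm V) :=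
  {g | g ∈ T.autSubgroup ∧ {v : V | ¬ LocalIn T C F g v}.Finite}

/-- Le Boudec's group `G(F, F')` with almost prescribed local action (as a set of
permutations of the vertices): `G(F) ∩ U(F')`. -/
def GFFSet {V : Type*} {d : ℕ} (T : SimpleGraph V) (C : LegalColoring T d)
    (F F' : Subgroup (Equiv.Perm (Fin d))) : Set (Equiv.Perm V) :=
  GSet T C F ∩ USet T C F'

/-!
Let `u` be a vertex fixed by `b` that is adjacent both to another fixed vertex and to a vertex
moved by `b`; one exists because `b ≠ 1` fixes the line `L`. A local permutation of `b` at `u`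
fixes a color, so if it lay in the freely acting `F` it would be trivial and `b` would fix
every neighbour of `u`. Hence `b` is singular at `u`, and, as `a` commutes with `b`, at
every `aⁿ u`. Since `a` translates `L`, `d(L 0, aⁿ u) ≥ n - d(u, L 0)`, so these singular
vertices are infinitely many, contradicting `b ∈ G(F)`.
-/

namespace SimpleGraph

variable {V : Type*} {G : SimpleGraph V}

def chainWalk (f : ℕ → V) (hf : ∀ k, G.Adj (f k) (f (k + 1))) :
    (n : ℕ) → G.Walk (f 0) (f n)
  | 0 => .nil
  | n + 1 => (chainWalk f hf n).concat (hf n)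

lemma support_chainWalk (f : ℕ → V) (hf : ∀ k, G.Adj (f k) (f (k + 1))) (n : ℕ) :
    (chainWalk f hf n).support = (List.range (n + 1)).map f := by
  induction n with
  | zero => rfl
  | succ n ih => simp [chainWalk, Walk.support_concat, ih, List.range_succ (n := n + 1)]

lemma length_chainWalk (f : ℕ → V) (hf : ∀ k, G.Adj (f k) (f (k + 1))) (n : ℕ) :
    (chainWalk f hf n).length = n := by
  induction n with
  | zero => rfl
  | succ n ih => simp [chainWalk, ih]

lemma isPath_chainWalk {f : ℕ → V} (hinj : Function.Injective f)
    (hf : ∀ k, G.Adj (f k) (f (k + 1))) (n : ℕ) : (chainWalk f hf n).IsPath := by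
  rw [Walk.isPath_def, support_chainWalk]
  exact List.nodup_range.map hinj

lemma IsAcyclic.length_eq_dist_of_isPath (hG : G.IsAcyclic) {u v : V} {p : G.Walk u v}
    (hp : p.IsPath) : p.length = G.dist u v := by
  obtain ⟨q, hq, hq_len⟩ := p.reachable.exists_path_of_dist
  have : (⟨p, hp⟩ : G.Path u v) = ⟨q, hq⟩ := (hG.subsingleton_path u v).elim _ _
  rw [← hq_len, show p = q from congrArg Subtype.val this]

lemma IsAcyclic.dist_eq_of_injective_of_adj (hG : G.IsAcyclic) {f : ℕ → V}
    (hinj : Function.Injective f) (hf : ∀ k, G.Adj (f k) (f (k + 1))) (n : ℕ) :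
    G.dist (f 0) (f n) = n := by
  rw [← hG.length_eq_dist_of_isPath (isPath_chainWalk hinj hf n), length_chainWalk]

lemma Hom.dist_map_le {W : Type*} {H : SimpleGraph W} (φ : G →g H) {u v : V}
    (huv : G.Reachable u v) : H.dist (φ u) (φ v) ≤ G.dist u v := by
  obtain ⟨p, hp⟩ := huv.exists_walk_length_eq_dist
  simpa [hp] using dist_le (p.map φ)

def autSubgroupIso {g : Equiv.Perm V} (hg : g ∈ G.autSubgroup) : G ≃g G :=
  ⟨g, hg _ _⟩

lemma Walk.exists_adj_fixed_adj_moved {g : V → V} {x' x y : V} (p : G.Walk x y)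
    (hx'x : G.Adj x' x) (hx' : g x' = x') (hx : g x = x) (hy : g y ≠ y) :
    ∃ u' u w, G.Adj u' u ∧ G.Adj u w ∧ g u' = u' ∧ g u = u ∧ g w ≠ w := by
  induction p generalizing x' with
  | nil => exact absurd hx hy
  | @cons x z y hxz q ih =>
    by_cases hz : g z = z
    · exact ih hxz hx hz hy
    · exact ⟨x', x, z, hx'x, hxz, hx', hx, hz⟩

end SimpleGraph

open SimpleGraph

section Translation

variable {V : Type*} {T : SimpleGraph V} {L : ℤ → V}

lemma pow_apply_of_translates {a : Equiv.Perm V} {m : ℤ} (haL : ∀ i, a (L i) = L (i + m))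
    (n : ℕ) (i : ℤ) : (a ^ n) (L i) = L (i + n * m) := by
  induction n generalizing i with
  | zero => simp
  | succ n ih =>
    rw [pow_succ, Equiv.Perm.mul_apply, haL, ih]
    congr 1
    push_cast
    ring

lemma le_dist_pow_apply_add_dist (hT : T.IsTree) (hLinj : Function.Injective L)
    (hLadj : ∀ i : ℤ, T.Adj (L i) (L (i + 1))) {a : Equiv.Perm V} (ha : a ∈ T.autSubgroup)
    {m : ℤ} (hm : 1 ≤ m) (haL : ∀ i, a (L i) = L (i + m)) (u : V) (n : ℕ) :
    n ≤ T.dist (L 0) ((a ^ n) u) + T.dist u (L 0) := by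
  obtain ⟨k, rfl⟩ : ∃ k : ℕ, m = k := Int.eq_ofNat_of_zero_le (by omega)
  have hline : T.dist (L 0) (L (n * k : ℕ)) = n * k :=
    hT.isAcyclic.dist_eq_of_injective_of_adj (f := fun j : ℕ ↦ L j)
      (hLinj.comp Nat.cast_injective) (fun j ↦ mod_cast hLadj j) (n * k)
  have hshift : T.dist ((a ^ n) u) (L (n * k : ℕ)) ≤ T.dist u (L 0) := by
    have h := (autSubgroupIso (pow_mem ha n)).toHom.dist_map_le (hT.connected u (L 0))
    simpa [autSubgroupIso, pow_apply_of_translates haL] using h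
  have htri := hT.connected.dist_triangle (u := L 0) (v := (a ^ n) u) (w := L (n * k : ℕ))
  have hk : n ≤ n * k := Nat.le_mul_of_pos_right n (by omega)
  omega

end Translation

lemma not_localIn_of_adj_fixed_adj_moved {V : Type*} {d : ℕ} {T : SimpleGraph V}
    {C : LegalColoring T d} {F : Subgroup (Equiv.Perm (Fin d))}
    (hfree : ∀ π ∈ F, π ≠ 1 → ∀ i : Fin d, π i ≠ i) {g : Equiv.Perm V}
    (hg : g ∈ T.autSubgroup) {u' u w : V} (hu'u : T.Adj u' u) (huw : T.Adj u w)
    (hu' : g u' = u') (hu : g u = u) (hw : g w ≠ w) : ¬ LocalIn T C F g u := by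
  rintro ⟨π, hπF, hπ⟩
  have hπ1 : π = 1 := by
    by_contra hne
    have h := hπ hu'u.symm
    rw [hu, hu'] at h
    exact hfree π hπF hne _ h.symm
  have hcolor : C.color u (g w) = C.color u w := by simpa [hu, hπ1] using hπ huw
  have hadj : T.Adj u (g w) := by simpa [hu] using (hg u w).mpr huw
  exact hw ((C.bij u (C.color u w)).unique ⟨hadj, hcolor⟩ ⟨huw, rfl⟩)

theorem GFF_commuting_with_translation_is_trivial_general {V : Type*} (d : ℕ)
    (F F' : Subgroup (Equiv.Perm (Fin d)))
    (hfree : ∀ π ∈ F, π ≠ 1 → ∀ i : Fin d, π i ≠ i)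
    (T : SimpleGraph V) (hT : T.IsTree) (C : LegalColoring T d)
    (L : ℤ → V) (hLinj : Function.Injective L)
    (hLadj : ∀ i : ℤ, T.Adj (L i) (L (i + 1)))
    (a b : Equiv.Perm V) (ha : a ∈ GFFSet T C F F') (hb : b ∈ GFFSet T C F F')
    (m : ℤ) (hm : 1 ≤ m) (haL : ∀ i : ℤ, a (L i) = L (i + m))
    (hbL : ∀ i : ℤ, b (L i) = L i)
    (hcomm : a * b = b * a) : b = 1 := by
  by_contra hb1
  obtain ⟨v, hv⟩ : ∃ v, b v ≠ v := by
    by_contra! h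
    exact hb1 (Equiv.ext h)
  obtain ⟨p⟩ := hT.connected (L 1) v
  obtain ⟨u', u, w, hu'u, huw, hu', hu, hw⟩ :=
    p.exists_adj_fixed_adj_moved (by simpa using hLadj 0) (hbL 0) (hbL 1) hv
  have hsing (n : ℕ) : (a ^ n) u ∈ {x | ¬ LocalIn T C F b x} := by
    have hpow := pow_mem ha.1.1 n
    have hswap (x : V) : b ((a ^ n) x) = (a ^ n) (b x) :=
      (DFunLike.congr_fun (Commute.pow_left hcomm n) x).symm
    refine not_localIn_of_adj_fixed_adj_moved hfree hb.1.1 ((hpow _ _).mpr hu'u)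
      ((hpow _ _).mpr huw) (by rw [hswap, hu']) (by rw [hswap, hu]) ?_
    rw [hswap]
    exact fun h ↦ hw ((a ^ n).injective h)
  obtain ⟨B, hB⟩ := (hb.1.2.image (T.dist (L 0))).bddAbove
  have hfar :=
    le_dist_pow_apply_add_dist hT hLinj hLadj ha.1.1 hm haL u (B + T.dist u (L 0) + 1)
  have hbound := hB ⟨_, hsing (B + T.dist u (L 0) + 1), rfl⟩
  omega

/-- If `F` acts freely, `a ∈ G(F, F')` translates a geodesic line `L` by `m ≥ 1` and
`b ∈ G(F, F')` fixes `L` pointwise, then `a` and `b` commute only if `b` is the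
identity. -/
theorem GFF_commuting_with_translation_is_trivial {V : Type*} (d : ℕ) (hd : 3 ≤ d)
    (F F' : Subgroup (Equiv.Perm (Fin d))) (hle : F ≤ F')
    (horb : ∀ π' ∈ F', ∀ i : Fin d, ∃ π ∈ F, π i = π' i)
    (hfree : ∀ π ∈ F, π ≠ 1 → ∀ i : Fin d, π i ≠ i)
    (T : SimpleGraph V) (hT : T.IsTree) (C : LegalColoring T d)
    (L : ℤ → V) (hLinj : Function.Injective L)
    (hLadj : ∀ i : ℤ, T.Adj (L i) (L (i + 1)))
    (a b : Equiv.Perm V) (ha : a ∈ GFFSet T C F F') (hb : b ∈ GFFSet T C F F')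
    (m : ℤ) (hm : 1 ≤ m) (haL : ∀ i : ℤ, a (L i) = L (i + m))
    (hbL : ∀ i : ℤ, b (L i) = L i)
    (hcomm : a * b = b * a) : b = 1 :=
  GFF_commuting_with_translation_is_trivial_general d F F' hfree T hT C L hLinj hLadj a b ha hb m hm
    haL hbL hcomm
end

section
/- Let d ≥ 3, Ω = {1,…,d}, and let T be a legally colored d-regular tree. For every geodesic ray γ in T there exists an automorphism g of T with σ(g,v) = id for every vertex v (i.e., g ∈ U({id}), a color-preserving automorphism) such that the vertex sets γ(ℕ) and g·γ(ℕ) have finite intersection. (Equivalently, the group U({id}) fixes no end of T.) -/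
/-!
The edge between `γ 0` and `γ 1` is inverted by a color-preserving automorphism `g`:
reading the color word of the path from `γ 0` to `w`, starting at `γ 1` instead, defines a
map commuting with every color step, and such a map is determined by
the image of one vertex, so `g` is an involution. As an isometry swapping `γ 0` and `γ 1`,
`g` sends `γ (m + 2)` to a vertex at distance `m + 1` from `γ 0` and `m + 2` from `γ 1`,
which no vertex of the ray is. Hence `γ(ℕ) ∩ g·γ(ℕ) ⊆ {γ 0, γ 1}`.
-/

namespace SimpleGraph

variable {V W : Type*} {G : SimpleGraph V} {G' : SimpleGraph W}

lemma Reachable.dist_map_le (f : G →g G') {u v : V} (h : G.Reachable u v) :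
    G'.dist (f u) (f v) ≤ G.dist u v := by
  obtain ⟨p, hp⟩ := h.exists_walk_length_eq_dist
  calc G'.dist (f u) (f v) ≤ (p.map f).length := dist_le _
    _ = G.dist u v := by rw [Walk.length_map, hp]

lemma Iso.dist_eq (f : G ≃g G') (u v : V) : G'.dist (f u) (f v) = G.dist u v := by
  by_cases h : G.Reachable u v
  · refine le_antisymm (h.dist_map_le f.toHom) ?_
    simpa using (h.map f.toHom).dist_map_le f.symm.toHom
  · rw [dist_eq_zero_of_not_reachable h,
      dist_eq_zero_of_not_reachable (mt Iso.reachable_iff.1 h)]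

lemma IsAcyclic.dist_eq_length (hG : G.IsAcyclic) {u v : V} {p : G.Walk u v}
    (hp : p.IsPath) : G.dist u v = p.length := by
  obtain ⟨q, hq, hqd⟩ := p.reachable.exists_path_of_dist
  rw [← hqd, Subtype.mk.inj (hG.subsingleton_path u v |>.elim ⟨p, hp⟩ ⟨q, hq⟩)]

section Ray

variable {γ : ℕ → V} (hγ : ∀ n, G.Adj (γ n) (γ (n + 1)))

def rayWalk : (n : ℕ) → G.Walk (γ 0) (γ n)
  | 0 => .nil
  | n + 1 => (rayWalk n).concat (hγ n)

lemma length_rayWalk (n : ℕ) : (rayWalk hγ n).length = n := by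
  induction n with
  | zero => rfl
  | succ n ih => rw [rayWalk, Walk.length_concat, ih]

lemma support_rayWalk (n : ℕ) : (rayWalk hγ n).support = (List.range (n + 1)).map γ := by
  induction n with
  | zero => rfl
  | succ n ih => rw [rayWalk, Walk.support_concat, ih, List.range_succ (n := n + 1)]; simp

lemma isPath_rayWalk (hinj : Function.Injective γ) (n : ℕ) : (rayWalk hγ n).IsPath := by
  rw [Walk.isPath_def, support_rayWalk]
  exact List.nodup_range.map hinj

end Ray

variable {γ : ℕ → V}

lemma IsAcyclic.dist_ray (hG : G.IsAcyclic) (hγ : ∀ n, G.Adj (γ n) (γ (n + 1)))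
    (hinj : Function.Injective γ) {m n : ℕ} (hmn : m ≤ n) : G.dist (γ m) (γ n) = n - m := by
  obtain ⟨k, rfl⟩ := Nat.exists_eq_add_of_le hmn
  have hγ' : ∀ j, G.Adj (γ (m + j)) (γ (m + (j + 1))) := fun j => hγ (m + j)
  have hinj' : Function.Injective fun j => γ (m + j) := hinj.comp (add_right_injective m)
  simpa [length_rayWalk] using hG.dist_eq_length (isPath_rayWalk hγ' hinj' k)

lemma IsAcyclic.apply_ray_ne_of_swap (hG : G.IsAcyclic) (hγ : ∀ n, G.Adj (γ n) (γ (n + 1)))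
    (hinj : Function.Injective γ) (f : G ≃g G) (h01 : f (γ 0) = γ 1) (h10 : f (γ 1) = γ 0) (m n : ℕ) :
    f (γ (m + 2)) ≠ γ n := by
  intro h
  have e1 := f.dist_eq (γ 1) (γ (m + 2))
  have e0 := f.dist_eq (γ 0) (γ (m + 2))
  rw [h10, h, hG.dist_ray hγ hinj n.zero_le, hG.dist_ray hγ hinj (by omega)] at e1
  obtain rfl : n = m + 1 := by omega
  rw [h01, h, hG.dist_ray hγ hinj (by omega), hG.dist_ray hγ hinj (by omega)] at e0
  omega

end SimpleGraph

namespace LegalColoring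

open SimpleGraph

variable {V : Type*} {T : SimpleGraph V} {d : ℕ} (C : LegalColoring T d)

noncomputable def nbr (x : V) (c : Fin d) : V :=
  (C.bij x c).exists.choose

lemma adj_nbr (x : V) (c : Fin d) : T.Adj x (C.nbr x c) :=
  (C.bij x c).exists.choose_spec.1

lemma color_nbr (x : V) (c : Fin d) : C.color x (C.nbr x c) = c :=
  (C.bij x c).exists.choose_spec.2

lemma eq_nbr {x w : V} (h : T.Adj x w) : w = C.nbr x (C.color x w) :=
  (C.bij x _).unique ⟨h, rfl⟩ ⟨C.adj_nbr x _, C.color_nbr x _⟩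

lemma nbr_nbr (x : V) (c : Fin d) : C.nbr (C.nbr x c) c = x := by
  have h := C.adj_nbr x c
  calc C.nbr (C.nbr x c) c = C.nbr (C.nbr x c) (C.color (C.nbr x c) x) := by
        rw [← C.symm h, C.color_nbr]
    _ = x := (C.eq_nbr h.symm).symm

def word {u v : V} (p : T.Walk u v) : List (Fin d) :=
  p.darts.map fun e => C.color e.fst e.snd

lemma word_concat {u v w : V} (p : T.Walk u v) (h : T.Adj v w) :
    C.word (p.concat h) = C.word p ++ [C.color v w] := by
  simp [word, Walk.darts_concat]

lemma foldl_nbr_word {u v : V} (p : T.Walk u v) : (C.word p).foldl C.nbr u = v := by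
  induction p with
  | nil => rfl
  | cons h p ih =>
    simp only [word, Walk.darts_cons, List.map_cons, List.foldl_cons]
    rw [← C.eq_nbr h]
    exact ih

/-- For a bijection `φ` this is membership in `U({id})`. -/
def IsColorPreserving (φ : V → V) : Prop :=
  ∀ x c, φ (C.nbr x c) = C.nbr (φ x) c

namespace IsColorPreserving

variable {C} {φ ψ : V → V}

lemma map_foldl (hφ : C.IsColorPreserving φ) (x : V) (l : List (Fin d)) :
    φ (l.foldl C.nbr x) = l.foldl C.nbr (φ x) := by
  induction l generalizing x with
  | nil => rfl
  | cons c l ih => simp only [List.foldl_cons, ih, hφ x c]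

lemma comp (hφ : C.IsColorPreserving φ) (hψ : C.IsColorPreserving ψ) :
    C.IsColorPreserving (φ ∘ ψ) := fun x c => by
  simp only [Function.comp_apply, hψ x c, hφ (ψ x) c]

lemma map_adj (hφ : C.IsColorPreserving φ) {x y : V} (h : T.Adj x y) :
    T.Adj (φ x) (φ y) := by
  rw [C.eq_nbr h, hφ]
  exact C.adj_nbr _ _

lemma color_map (hφ : C.IsColorPreserving φ) {x y : V} (h : T.Adj x y) :
    C.color (φ x) (φ y) = C.color x y := by
  rw [C.eq_nbr h, hφ]
  simp only [color_nbr]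

lemma eq_of_apply_eq (hT : T.Preconnected) (hφ : C.IsColorPreserving φ)
    (hψ : C.IsColorPreserving ψ) {x : V} (h : φ x = ψ x) : φ = ψ := by
  funext w
  obtain ⟨p⟩ := hT x w
  rw [← C.foldl_nbr_word p, hφ.map_foldl, hψ.map_foldl, h]

end IsColorPreserving

section Transfer

variable (hT : T.IsTree)

noncomputable def transfer (x y w : V) : V :=
  (C.word (hT.existsUnique_path x w).exists.choose).foldl C.nbr y

lemma transfer_eq {x w : V} (y : V) {p : T.Walk x w} (hp : p.IsPath) :
    C.transfer hT x y w = (C.word p).foldl C.nbr y := by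
  rw [transfer, (hT.existsUnique_path x w).unique
    (hT.existsUnique_path x w).exists.choose_spec hp]

lemma transfer_self (x y : V) : C.transfer hT x y x = y :=
  C.transfer_eq hT y Walk.IsPath.nil

lemma transfer_of_isPath_concat {x v w : V} (y : V) {p : T.Walk x v} (hp : p.IsPath)
    (h : T.Adj v w) (hpw : (p.concat h).IsPath) :
    C.transfer hT x y w = C.nbr (C.transfer hT x y v) (C.color v w) := by
  rw [C.transfer_eq hT y hpw, C.transfer_eq hT y hp, word_concat, List.foldl_concat]

/-- In a tree the path to a neighbor of `w` either extends or retracts the path to `w` by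
one edge of the same color. -/
lemma isColorPreserving_transfer (x y : V) : C.IsColorPreserving (C.transfer hT x y) := by
  intro w c
  have h := C.adj_nbr w c
  obtain ⟨p, hp, -⟩ := hT.existsUnique_path x w
  obtain ⟨q, hq, -⟩ := hT.existsUnique_path x (C.nbr w c)
  by_cases hw : w ∈ q.support
  · have hqp := hT.isAcyclic.path_concat hp hq h hw
    rw [C.transfer_of_isPath_concat hT y hp h (hqp ▸ hq), C.color_nbr]
  · have hpq := hT.isAcyclic.path_concat hq hp h.symm
      (hT.isAcyclic.mem_support_of_ne_mem_support_of_adj_of_isPath hp hq h hw)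
    rw [C.transfer_of_isPath_concat hT y hq h.symm (hpq ▸ hp), ← C.symm h, C.color_nbr,
      C.nbr_nbr]

end Transfer

lemma exists_iso_swap (hT : T.IsTree) {x y : V} (h : T.Adj x y) :
    ∃ f : T ≃g T, (∀ ⦃v w : V⦄, T.Adj v w → C.color (f v) (f w) = C.color v w) ∧
      f x = y ∧ f y = x := by
  set φ := C.transfer hT x y
  have hφ : C.IsColorPreserving φ := C.isColorPreserving_transfer hT x y
  have hφx : φ x = y := C.transfer_self hT x y
  have hφy : φ y = x := by
    conv_lhs => rw [C.eq_nbr h, hφ, hφx]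
    simpa only [← C.eq_nbr h] using C.nbr_nbr x (C.color x y)
  have hinv : Function.Involutive φ := congrFun <|
    (hφ.comp hφ).eq_of_apply_eq (ψ := id) hT.connected.preconnected (fun _ _ => rfl)
      (x := x) (by simp [hφx, hφy])
  refine ⟨⟨hinv.toPerm φ, fun {a b} => ⟨fun hab => ?_, hφ.map_adj⟩⟩, fun v w => hφ.color_map,
    hφx, hφy⟩
  simpa only [Function.Involutive.coe_toPerm, hinv _] using hφ.map_adj hab

end LegalColoring

theorem Uid_fixes_no_end_general {V : Type*} (d : ℕ)
    (T : SimpleGraph V) (hT : T.IsTree) (C : LegalColoring T d)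
    (γ : ℕ → V) (hinj : Function.Injective γ)
    (hadj : ∀ n : ℕ, T.Adj (γ n) (γ (n + 1))) :
    ∃ g ∈ T.autSubgroup,
      (∀ v w : V, T.Adj v w → C.color (g v) (g w) = C.color v w) ∧
      (Set.range γ ∩ Set.range fun n => g (γ n)).Finite := by
  obtain ⟨f, hcolor, h01, h10⟩ := C.exists_iso_swap hT (hadj 0)
  refine ⟨f.toEquiv, fun u v => f.map_adj_iff, fun v w h => hcolor h,
    (Set.toFinite {γ 0, γ 1}).subset ?_⟩
  rintro _ ⟨⟨n, rfl⟩, m, hm⟩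
  match m, hm with
  | 0, hm => exact .inr (hm.symm.trans h01)
  | 1, hm => exact .inl (hm.symm.trans h10)
  | m + 2, hm => exact absurd hm (hT.isAcyclic.apply_ray_ne_of_swap hadj hinj f h01 h10 m n)

/-- For every geodesic ray `γ` in a legally colored `d`-regular tree (`d ≥ 3`) there is a
color-preserving automorphism `g` (i.e. `σ(g, v) = id` for all `v`, so `g ∈ U({id})`)
such that `γ(ℕ)` and `g·γ(ℕ)` have finite intersection: `U({id})` fixes no end of `T`. -/
theorem Uid_fixes_no_end {V : Type*} (d : ℕ) (hd : 3 ≤ d)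
    (T : SimpleGraph V) (hT : T.IsTree) (C : LegalColoring T d)
    (γ : ℕ → V) (hinj : Function.Injective γ)
    (hadj : ∀ n : ℕ, T.Adj (γ n) (γ (n + 1))) :
    ∃ g ∈ T.autSubgroup,
      (∀ v w : V, T.Adj v w → C.color (g v) (g w) = C.color v w) ∧
      (Set.range γ ∩ Set.range fun n => g (γ n)).Finite :=
  Uid_fixes_no_end_general d T hT C γ hinj hadj
end
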